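/- arXiv:1007.4152 — 6 statements merged into one kernel-verified Lean document; each statement's English description precedes it below -/
import Mathlib

section
/- Let f : [0,∞) → ℝ be continuous on [0,∞) and differentiable on (0,∞) with f′ operator antitone on (0,∞), and let M₁,…,M_s be m×m real symmetric positive semidefinite matrices. Then the set function F : 2^{[s]} → ℝ defined by F(I) = trace f(Σ_{i∈I} M_i) is submodular: F(I) + F(J) ≥ F(I∪J) + F(I∩J) for all I, J ⊆ {1,…,s}. -/
/-!
Since `f'` is antitone on `(0,∞)`, `f` is concave there, which gives Klein's inequality
`tr f(Y) ≤ tr f(X) + tr (f'(X) (Y - X))` for positive definite `X, Y`. Let `A ⪯ B` be positive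
definite and `Δ ⪰ 0`. Over a step `[t, t + h]`, Klein's inequality bounds the increment of
`t ↦ tr f(B + tΔ)` above by `h tr (f'(B + tΔ) Δ) ≤ h tr (f'(A + tΔ) Δ)` (operator antitonicity of
`f'`) and the increment of `t ↦ tr f(A + tΔ)` below by `h tr (f'(A + (t + h)Δ) Δ)`. Summing over a
partition of `[0, 1]` the error terms telescope to `O(1/n)`, which yields the diminishing-returns
inequality `tr f(B + Δ) + tr f(A) ≤ tr f(A + Δ) + tr f(B)`. It extends to positive semidefinite
`A` by replacing `A, B` with `A + εI, B + εI` and letting `ε → 0⁺`. Submodularity is the case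
`A = ∑_{I ∩ J} Mᵢ`, `B = ∑_J Mᵢ`, `Δ = ∑_{I \ J} Mᵢ`.
-/

open Matrix in
/-- Applying a real function to a real symmetric matrix via the spectral
decomposition: `f(A) = U Diag(f(λ₁),…,f(λ_m)) Uᵀ`. Junk value `0` on
non-symmetric input. -/
noncomputable def matFun (f : ℝ → ℝ) {m : ℕ} (A : Matrix (Fin m) (Fin m) ℝ) :
    Matrix (Fin m) (Fin m) ℝ :=
  if hA : A.IsHermitian then
    (hA.eigenvectorUnitary : Matrix (Fin m) (Fin m) ℝ) *
      Matrix.diagonal (fun i => f (hA.eigenvalues i)) *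
      star (hA.eigenvectorUnitary : Matrix (Fin m) (Fin m) ℝ)
  else 0

/-- `g` is operator antitone on `(0,∞)` : for every dimension `m` and all
positive definite matrices `A ⪯ B` (Löwner order, i.e. `B - A` positive
semidefinite), the matrix `g(A) - g(B)` is positive semidefinite. -/
def OperatorAntitoneOn (g : ℝ → ℝ) : Prop :=
  ∀ (m : ℕ) (A B : Matrix (Fin m) (Fin m) ℝ), A.PosDef → B.PosDef →
    (B - A).PosSemidef → (matFun g A - matFun g B).PosSemidef

open Matrix Filter Topology

section MatFun

variable {m : ℕ}

lemma matFun_eq_cfc (f : ℝ → ℝ) {A : Matrix (Fin m) (Fin m) ℝ} (hA : A.IsHermitian) :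
    matFun f A = cfc f A := by
  rw [matFun, dif_pos hA, hA.cfc_eq, IsHermitian.cfc, Unitary.conjStarAlgAut_apply]
  rfl

lemma trace_matFun (f : ℝ → ℝ) {A : Matrix (Fin m) (Fin m) ℝ} (hA : A.IsHermitian) :
    (matFun f A).trace = ∑ i, f (hA.eigenvalues i) := by
  rw [matFun, dif_pos hA, trace_mul_cycle, Unitary.coe_star_mul_self, one_mul, trace_diagonal]

lemma matFun_smul_one (f : ℝ → ℝ) (a : ℝ) :
    matFun f (a • 1 : Matrix (Fin m) (Fin m) ℝ) = f a • 1 := by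
  simp only [← Algebra.algebraMap_eq_smul_one]
  have ha : (algebraMap ℝ (Matrix (Fin m) (Fin m) ℝ) a).IsHermitian :=
    (IsSelfAdjoint.all a).algebraMap _
  rw [matFun_eq_cfc f ha, cfc_algebraMap]

lemma matFun_add_smul_one (f : ℝ → ℝ) {X : Matrix (Fin m) (Fin m) ℝ} (hX : X.IsHermitian)
    (ε : ℝ) :
    matFun f (X + ε • 1) = matFun (fun x => f (x + ε)) X := by
  have hε : (algebraMap ℝ (Matrix (Fin m) (Fin m) ℝ) ε).IsHermitian :=
    (IsSelfAdjoint.all ε).algebraMap _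
  rw [← Algebra.algebraMap_eq_smul_one, matFun_eq_cfc f (hX.add hε), matFun_eq_cfc _ hX,
    cfc_comp' f (· + ε) X ((X.finite_real_spectrum.image _).continuousOn f),
    cfc_add_const ε (fun x => x) X, cfc_id' ℝ X]

lemma matFun_mul_self (f : ℝ → ℝ) {X : Matrix (Fin m) (Fin m) ℝ} (hX : X.IsHermitian) :
    matFun f X * X = matFun (fun x => f x * x) X := by
  rw [matFun_eq_cfc _ hX, matFun_eq_cfc _ hX,
    cfc_mul f (fun x => x) X (X.finite_real_spectrum.continuousOn f), cfc_id' ℝ X]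

lemma trace_conj_diagonal_mul_conj_diagonal {n : Type*} [Fintype n] [DecidableEq n]
    (U V : Matrix n n ℝ) (d e : n → ℝ) :
    (U * diagonal d * star U * (V * diagonal e * star V)).trace =
      ∑ i, ∑ j, d i * e j * (star U * V) i j ^ 2 := by
  set W := star U * V
  have hcycle : (U * diagonal d * star U * (V * diagonal e * star V)).trace =
      (diagonal d * (W * diagonal e * star W)).trace := by
    simp only [W, star_mul, star_star, Matrix.mul_assoc]
    rw [trace_mul_comm U]
    simp only [Matrix.mul_assoc]
  rw [hcycle, trace]
  refine Finset.sum_congr rfl fun i _ => ?_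
  rw [diag_apply, diagonal_mul, mul_apply, Finset.mul_sum]
  simp only [mul_diagonal, star_apply, star_trivial]
  exact Finset.sum_congr rfl fun j _ => by ring

lemma matFun_id {A : Matrix (Fin m) (Fin m) ℝ} (hA : A.IsHermitian) :
    matFun (fun x => x) A = A := by
  rw [matFun_eq_cfc _ hA, cfc_id' ℝ A]

lemma matFun_one {A : Matrix (Fin m) (Fin m) ℝ} (hA : A.IsHermitian) :
    matFun (fun _ => 1) A = 1 := by
  rw [matFun_eq_cfc _ hA, cfc_const_one ℝ A]

lemma trace_matFun_mul_matFun (g h : ℝ → ℝ) {X Y : Matrix (Fin m) (Fin m) ℝ}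
    (hX : X.IsHermitian) (hY : Y.IsHermitian) :
    (matFun g X * matFun h Y).trace =
      ∑ i, ∑ j, g (hX.eigenvalues i) * h (hY.eigenvalues j) *
        (star (hX.eigenvectorUnitary : Matrix (Fin m) (Fin m) ℝ) * hY.eigenvectorUnitary) i j ^ 2 := by
  rw [matFun, dif_pos hX, matFun, dif_pos hY, trace_conj_diagonal_mul_conj_diagonal]

lemma Matrix.PosSemidef.trace_mul_nonneg {P Q : Matrix (Fin m) (Fin m) ℝ} (hP : P.PosSemidef)
    (hQ : Q.PosSemidef) : 0 ≤ (P * Q).trace := by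
  rw [← matFun_id hP.1, ← matFun_id hQ.1, trace_matFun_mul_matFun _ _ hP.1 hQ.1]
  exact Finset.sum_nonneg fun i _ => Finset.sum_nonneg fun j _ =>
    mul_nonneg (mul_nonneg (hP.eigenvalues_nonneg i) (hQ.eigenvalues_nonneg j)) (sq_nonneg _)

lemma trace_matFun_le_of_tangent {f d : ℝ → ℝ} {S : Set ℝ}
    (htan : ∀ a ∈ S, ∀ b ∈ S, f b ≤ f a + d a * (b - a)) {X Y : Matrix (Fin m) (Fin m) ℝ}
    (hX : X.IsHermitian) (hY : Y.IsHermitian) (hXS : ∀ i, hX.eigenvalues i ∈ S)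
    (hYS : ∀ j, hY.eigenvalues j ∈ S) :
    (matFun f Y).trace ≤ (matFun f X).trace + (matFun d X * (Y - X)).trace := by
  have hfY : (matFun f Y).trace = (matFun (fun _ => 1) X * matFun f Y).trace := by
    rw [matFun_one hX, Matrix.one_mul]
  have hfX : (matFun f X).trace = (matFun f X * matFun (fun _ => 1) Y).trace := by
    rw [matFun_one hY, Matrix.mul_one]
  have hdX : (matFun d X * (Y - X)).trace =
      (matFun d X * matFun (fun x => x) Y).trace -
        (matFun (fun x => d x * x) X * matFun (fun _ => 1) Y).trace := by
    rw [matFun_id hY, matFun_one hY, Matrix.mul_one, ← matFun_mul_self d hX, Matrix.mul_sub,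
      trace_sub]
  -- All four traces are sums weighted by the squared entries of the orthogonal matrix `Uᵀ V`
  -- relating the two eigenbases, so the inequality holds term by term.
  rw [hfY, hfX, hdX]
  simp only [trace_matFun_mul_matFun _ _ hX hY, ← Finset.sum_sub_distrib, ← Finset.sum_add_distrib]
  gcongr with i _ j _
  linarith [mul_le_mul_of_nonneg_right (htan _ (hXS i) _ (hYS j)) (sq_nonneg
    ((star (hX.eigenvectorUnitary : Matrix (Fin m) (Fin m) ℝ) * hY.eigenvectorUnitary) i j))]

lemma le_add_deriv_mul_sub_of_antitoneOn {f : ℝ → ℝ} {S : Set ℝ} (hS : S.OrdConnected)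
    (hf : DifferentiableOn ℝ f S) (hf' : AntitoneOn (deriv f) S) {a b : ℝ} (ha : a ∈ S)
    (hb : b ∈ S) : f b ≤ f a + deriv f a * (b - a) := by
  rcases lt_trichotomy a b with hab | rfl | hba
  · obtain ⟨c, hc, hslope⟩ := exists_deriv_eq_slope f hab (hf.continuousOn.mono (hS.out ha hb))
      (hf.mono (Set.Ioo_subset_Icc_self.trans (hS.out ha hb)))
    have hfc : deriv f c ≤ deriv f a :=
      hf' ha (hS.out ha hb (Set.Ioo_subset_Icc_self hc)) hc.1.le
    rw [eq_div_iff (sub_ne_zero.2 hab.ne')] at hslope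
    nlinarith
  · simp
  · obtain ⟨c, hc, hslope⟩ := exists_deriv_eq_slope f hba (hf.continuousOn.mono (hS.out hb ha))
      (hf.mono (Set.Ioo_subset_Icc_self.trans (hS.out hb ha)))
    have hfc : deriv f a ≤ deriv f c :=
      hf' (hS.out hb ha (Set.Ioo_subset_Icc_self hc)) ha hc.2.le
    rw [eq_div_iff (sub_ne_zero.2 hba.ne')] at hslope
    nlinarith

lemma OperatorAntitoneOn.antitoneOn {g : ℝ → ℝ} (hg : OperatorAntitoneOn g) :
    AntitoneOn g (Set.Ioi 0) := by
  intro a ha b hb hab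
  have h := hg 1 (a • 1) (b • 1) (PosDef.one.smul ha) (PosDef.one.smul hb)
    (by rw [← sub_smul]; exact PosSemidef.one.smul (sub_nonneg.2 hab))
  rw [matFun_smul_one, matFun_smul_one, ← sub_smul] at h
  simpa using h.diag_nonneg (i := 0)

lemma OperatorAntitoneOn.trace_mul_le {g : ℝ → ℝ} (hg : OperatorAntitoneOn g)
    {X Y Δ : Matrix (Fin m) (Fin m) ℝ} (hX : X.PosDef) (hY : Y.PosDef)
    (hXY : (Y - X).PosSemidef) (hΔ : Δ.PosSemidef) :
    (matFun g Y * Δ).trace ≤ (matFun g X * Δ).trace := by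
  have h := (hg m X Y hX hY hXY).trace_mul_nonneg hΔ
  rwa [Matrix.sub_mul, trace_sub, sub_nonneg] at h

lemma apply_le_apply_zero_of_sub_le_mul_sub {φ c : ℝ → ℝ}
    (hφ : ∀ t h, 0 ≤ t → 0 ≤ h → φ (t + h) - φ t ≤ h * (c t - c (t + h))) {x : ℝ} (hx : 0 ≤ x) :
    φ x ≤ φ 0 := by
  have hstep : ∀ n : ℕ, 0 < n → φ x - φ 0 ≤ (c 0 - c x) * x / n := by
    intro n hn
    set δ := x / n
    have hnδ : (n : ℝ) * δ = x := mul_div_cancel₀ x (by positivity)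
    calc φ x - φ 0 = ∑ k ∈ Finset.range n, (φ ((k + 1 : ℕ) * δ) - φ (k * δ)) := by
          rw [Finset.sum_range_sub (fun k : ℕ => φ (k * δ)), hnδ]; simp
      _ ≤ ∑ k ∈ Finset.range n, δ * (c (k * δ) - c ((k + 1 : ℕ) * δ)) := by
          gcongr with k
          have := hφ (k * δ) δ (by positivity) (by positivity)
          rwa [Nat.cast_succ, add_one_mul]
      _ = (c 0 - c x) * x / n := by
          rw [← Finset.mul_sum, Finset.sum_range_sub' (fun k : ℕ => c (k * δ)), hnδ]
          simp only [δ, Nat.cast_zero, zero_mul]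
          ring
  have hlim := tendsto_const_div_atTop_nhds_zero_nat ((c 0 - c x) * x)
  have : φ x - φ 0 ≤ 0 := ge_of_tendsto hlim (eventually_atTop.2 ⟨1, hstep⟩)
  linarith

variable {f : ℝ → ℝ} {A B Δ : Matrix (Fin m) (Fin m) ℝ}

lemma trace_matFun_add_add_le_of_posDef (hf_diff : DifferentiableOn ℝ f (Set.Ioi 0))
    (hf'_anti : OperatorAntitoneOn (deriv f)) (hA : A.PosDef) (hAB : (B - A).PosSemidef)
    (hΔ : Δ.PosSemidef) :
    (matFun f (B + Δ)).trace + (matFun f A).trace ≤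
      (matFun f (A + Δ)).trace + (matFun f B).trace := by
  have hklein : ∀ X Y : Matrix (Fin m) (Fin m) ℝ, (hX : X.PosDef) → (hY : Y.PosDef) →
      (matFun f Y).trace ≤ (matFun f X).trace + (matFun (deriv f) X * (Y - X)).trace :=
    fun X Y hX hY => trace_matFun_le_of_tangent
      (fun a ha b hb => le_add_deriv_mul_sub_of_antitoneOn Set.ordConnected_Ioi hf_diff
        hf'_anti.antitoneOn ha hb) hX.1 hY.1 hX.eigenvalues_pos hY.eigenvalues_pos
  have hB : B.PosDef := by simpa using hA.add_posSemidef hAB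
  have hpath : ∀ {C : Matrix (Fin m) (Fin m) ℝ}, C.PosDef → ∀ t : ℝ, 0 ≤ t →
      (C + t • Δ).PosDef :=
    fun hC t ht => hC.add_posSemidef (hΔ.smul ht)
  set φ : ℝ → ℝ := fun t => (matFun f (B + t • Δ)).trace - (matFun f (A + t • Δ)).trace
  set c : ℝ → ℝ := fun t => (matFun (deriv f) (A + t • Δ) * Δ).trace
  have hstep : ∀ t h, 0 ≤ t → 0 ≤ h → φ (t + h) - φ t ≤ h * (c t - c (t + h)) := by
    intro t h ht hh
    have hB_step := hklein _ (B + (t + h) • Δ) (hpath hB t ht) (hpath hB _ (add_nonneg ht hh))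
    have hA_step :=
      hklein (A + (t + h) • Δ) (A + t • Δ) (hpath hA _ (add_nonneg ht hh)) (hpath hA t ht)
    have hmono := hf'_anti.trace_mul_le (hpath hA t ht) (hpath hB t ht) (by simpa using hAB) hΔ
    rw [add_smul, ← add_assoc, add_sub_cancel_left, Matrix.mul_smul, trace_smul, smul_eq_mul]
      at hB_step
    rw [add_smul, ← add_assoc, sub_add_cancel_left, Matrix.mul_neg, Matrix.mul_smul, trace_neg,
      trace_smul, smul_eq_mul] at hA_step
    simp only [φ, c, add_smul, ← add_assoc]
    linarith [mul_le_mul_of_nonneg_left hmono hh]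
  have h := apply_le_apply_zero_of_sub_le_mul_sub hstep zero_le_one
  simp only [φ, one_smul, zero_smul, add_zero] at h
  linarith

lemma tendsto_trace_matFun_add_smul_one (hf_cont : ContinuousOn f (Set.Ici 0))
    (hA : A.PosSemidef) :
    Tendsto (fun ε : ℝ => (matFun f (A + ε • 1)).trace) (𝓝[>] 0) (𝓝 (matFun f A).trace) := by
  simp only [matFun_add_smul_one f hA.1, trace_matFun _ hA.1]
  refine tendsto_finsetSum _ fun i _ => ?_
  have hcont : ContinuousWithinAt (fun ε => f (hA.1.eigenvalues i + ε)) (Set.Ioi 0) 0 :=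
    (hf_cont _ (by simpa using hA.eigenvalues_nonneg i)).comp
      (continuous_const.add continuous_id).continuousWithinAt
      fun ε hε => by simp only [Set.mem_Ici]; linarith [hA.eigenvalues_nonneg i, Set.mem_Ioi.1 hε]
  simpa using hcont.tendsto

lemma trace_matFun_add_add_le (hf_cont : ContinuousOn f (Set.Ici 0))
    (hf_diff : DifferentiableOn ℝ f (Set.Ioi 0)) (hf'_anti : OperatorAntitoneOn (deriv f))
    (hA : A.PosSemidef) (hAB : (B - A).PosSemidef) (hΔ : Δ.PosSemidef) :
    (matFun f (B + Δ)).trace + (matFun f A).trace ≤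
      (matFun f (A + Δ)).trace + (matFun f B).trace := by
  have hB : B.PosSemidef := by simpa using hA.add hAB
  refine le_of_tendsto_of_tendsto
    ((tendsto_trace_matFun_add_smul_one hf_cont (hB.add hΔ)).add
      (tendsto_trace_matFun_add_smul_one hf_cont hA))
    ((tendsto_trace_matFun_add_smul_one hf_cont (hA.add hΔ)).add
      (tendsto_trace_matFun_add_smul_one hf_cont hB))
    (eventually_nhdsWithin_of_forall fun ε hε => ?_)
  have hAε : (A + ε • 1).PosDef := PosDef.posSemidef_add hA (PosDef.one.smul hε)
  have h := trace_matFun_add_add_le_of_posDef hf_diff hf'_anti hAε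
    (B := B + ε • 1) (by simpa using hAB) hΔ
  rwa [add_right_comm B, add_right_comm A] at h

end MatFun

/-- If `f` is continuous on `[0,∞)`, differentiable on `(0,∞)`,
with operator antitone derivative on `(0,∞)`, and `M₁,…,M_s` are positive
semidefinite, then `I ↦ trace f(∑_{i∈I} M_i)` is submodular. -/
theorem trace_matFun_sum_submodular (f : ℝ → ℝ)
    (hf_cont : ContinuousOn f (Set.Ici (0 : ℝ)))
    (hf_diff : DifferentiableOn ℝ f (Set.Ioi (0 : ℝ)))
    (hf'_anti : OperatorAntitoneOn (deriv f))
    (m s : ℕ) (M : Fin s → Matrix (Fin m) (Fin m) ℝ)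
    (hM : ∀ i, (M i).PosSemidef) (I J : Finset (Fin s)) :
    (matFun f (∑ i ∈ I ∪ J, M i)).trace + (matFun f (∑ i ∈ I ∩ J, M i)).trace ≤
      (matFun f (∑ i ∈ I, M i)).trace + (matFun f (∑ i ∈ J, M i)).trace := by
  have hsum : ∀ S : Finset (Fin s), (∑ i ∈ S, M i).PosSemidef :=
    fun S => posSemidef_sum S fun i _ => hM i
  have hI : ∑ i ∈ I, M i = ∑ i ∈ I ∩ J, M i + ∑ i ∈ I \ J, M i :=
    (Finset.sum_inter_add_sum_sdiff I J M).symm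
  have hIJ : ∑ i ∈ I ∪ J, M i = ∑ i ∈ J, M i + ∑ i ∈ I \ J, M i := by
    rw [← Finset.union_sdiff_right, add_comm, Finset.sum_sdiff Finset.subset_union_right]
  have hJ : ∑ i ∈ J, M i - ∑ i ∈ I ∩ J, M i = ∑ i ∈ J \ (I ∩ J), M i :=
    (Finset.sum_sdiff_eq_sub Finset.inter_subset_right).symm
  rw [hIJ, hI]
  exact trace_matFun_add_add_le hf_cont hf_diff hf'_anti (hsum _) (hJ ▸ hsum _) (hsum _)
end

section
/- Let M₁,…,M_s be m×m real symmetric positive semidefinite matrices. Then the set function I ↦ rank(Σ_{i∈I} M_i) on subsets of {1,…,s} is submodular: for all I, J ⊆ {1,…,s}, rank(Σ_{i∈I} M_i) + rank(Σ_{i∈J} M_i) ≥ rank(Σ_{i∈I∪J} M_i) + rank(Σ_{i∈I∩J} M_i). -/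
/-!
The kernel of a sum of positive semidefinite matrices is the intersection of their kernels,
since `x⋆ (∑ Mᵢ) x = ∑ x⋆ Mᵢ x` is a sum of nonnegative terms. Hence
`rank (∑_{i∈I} Mᵢ) = m - dim (⋂_{i∈I} ker Mᵢ)`, and submodularity of the rank becomes
supermodularity of `I ↦ dim K_I` with `K_I = ⋂_{i∈I} ker Mᵢ`. That holds for any family of
subspaces by Grassmann's formula, since `K_{I∪J} = K_I ⊓ K_J` and `K_I ⊔ K_J ≤ K_{I∩J}`.
-/

open Matrix Module

theorem Submodule.finrank_biInf_add_finrank_biInf_le {ι K V : Type*} [DecidableEq ι]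
    [DivisionRing K] [AddCommGroup V] [Module K V] [FiniteDimensional K V]
    (W : ι → Submodule K V) (I J : Finset ι) :
    finrank K ↥(⨅ i ∈ I, W i) + finrank K ↥(⨅ i ∈ J, W i) ≤
      finrank K ↥(⨅ i ∈ I ∪ J, W i) + finrank K ↥(⨅ i ∈ I ∩ J, W i) := by
  have hsup : (⨅ i ∈ I, W i) ⊔ (⨅ i ∈ J, W i) ≤ ⨅ i ∈ I ∩ J, W i :=
    sup_le (biInf_mono fun _ hi => (Finset.mem_inter.1 hi).1)
      (biInf_mono fun _ hi => (Finset.mem_inter.1 hi).2)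
  rw [Finset.iInf_union, ← Submodule.finrank_sup_add_finrank_inf_eq, add_comm]
  exact Nat.add_le_add_left (Submodule.finrank_mono hsup) _

namespace Matrix

theorem rank_add_finrank_ker_mulVecLin {m n R : Type*} [Fintype n] [Field R]
    (A : Matrix m n R) : A.rank + finrank R (LinearMap.ker A.mulVecLin) = Fintype.card n := by
  rw [Matrix.rank, LinearMap.finrank_range_add_finrank_ker, finrank_fintype_fun_eq_card]

open scoped ComplexOrder in
theorem PosSemidef.ker_sum_mulVecLin {ι n 𝕜 : Type*} [Fintype n] [RCLike 𝕜]
    {M : ι → Matrix n n 𝕜} {s : Finset ι} (hM : ∀ i ∈ s, (M i).PosSemidef) :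
    LinearMap.ker (∑ i ∈ s, M i).mulVecLin = ⨅ i ∈ s, LinearMap.ker (M i).mulVecLin := by
  ext x
  simp only [LinearMap.mem_ker, mulVecLin_apply, Submodule.mem_iInf, sum_mulVec]
  refine ⟨fun hx i hi => ?_, fun hx => Finset.sum_eq_zero hx⟩
  have hform : ∑ j ∈ s, star x ⬝ᵥ M j *ᵥ x = 0 := by
    rw [← dotProduct_sum, hx, dotProduct_zero]
  refine ((hM i hi).dotProduct_mulVec_zero_iff x).1 ?_
  exact (Finset.sum_eq_zero_iff_of_nonneg fun j hj => (hM j hj).dotProduct_mulVec_nonneg x).1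
    hform i hi

end Matrix

/-- For positive semidefinite matrices `M₁,…,M_s`, the set
function `I ↦ rank (∑_{i∈I} M_i)` is submodular. -/
theorem rank_sum_submodular (m s : ℕ) (M : Fin s → Matrix (Fin m) (Fin m) ℝ)
    (hM : ∀ i, (M i).PosSemidef) (I J : Finset (Fin s)) :
    (∑ i ∈ I ∪ J, M i).rank + (∑ i ∈ I ∩ J, M i).rank ≤
      (∑ i ∈ I, M i).rank + (∑ i ∈ J, M i).rank := by
  have hrank (T : Finset (Fin s)) :
      (∑ i ∈ T, M i).rank + finrank ℝ ↥(⨅ i ∈ T, LinearMap.ker (M i).mulVecLin) = m := by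
    rw [← PosSemidef.ker_sum_mulVecLin fun i _ => hM i, rank_add_finrank_ker_mulVecLin,
      Fintype.card_fin]
  have := Submodule.finrank_biInf_add_finrank_biInf_le (fun i => LinearMap.ker (M i).mulVecLin) I J
  have := hrank I; have := hrank J; have := hrank (I ∪ J); have := hrank (I ∩ J)
  omega
end

section
/- Let M₁,…,M_s be m×m real symmetric positive definite matrices. Then for all I, J ⊆ {1,…,s} with I ∩ J ≠ ∅, one has det(Σ_{i∈I} M_i) · det(Σ_{i∈J} M_i) ≥ det(Σ_{i∈I∪J} M_i) · det(Σ_{i∈I∩J} M_i); equivalently, the set function I ↦ log det(Σ_{i∈I} M_i) is submodular on nonempty intersecting subsets of {1,…,s}. -/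
/-!
Put `X = ∑_{I∩J} M_i ≤ Y = ∑_I M_i` (Loewner order) and `C = ∑_{J∖I} M_i = T²`; the claim is
`det (Y + C) / det Y ≤ det (X + C) / det X`. By the matrix determinant lemma
`det (X + T²) = det X · det (1 + T X⁻¹ T)`, and this ratio decreases as `X` grows because
matrix inversion is antitone and `det` is monotone on positive definite matrices.
-/

open Matrix
open scoped MatrixOrder ComplexOrder

namespace Matrix

variable {n : Type*}

theorem PosDef.of_le {𝕜 : Type*} [RCLike 𝕜] {X Y : Matrix n n 𝕜} (hX : X.PosDef) (hXY : X ≤ Y) :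
    Y.PosDef := by
  simpa using hX.add_posSemidef (le_iff.mp hXY)

variable [Fintype n] [DecidableEq n]

theorem PosDef.inv_le_inv {𝕜 : Type*} [RCLike 𝕜] {X Y : Matrix n n 𝕜} (hX : X.PosDef)
    (hXY : X ≤ Y) : Y⁻¹ ≤ X⁻¹ := by
  have hY := hX.of_le hXY
  let := hY.isUnit.invertible
  let := hX.inv.isUnit.invertible
  -- both inequalities say that `fromBlocks Y 1 1 X⁻¹` is positive semidefinite (Schur complements)
  have hblock := (PosDef.fromBlocks₂₂ Y 1 hX.inv).mpr <| by
    simpa [nonsing_inv_nonsing_inv _ hX.det_pos.ne'.isUnit] using le_iff.mp hXY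
  simpa [le_iff] using (PosDef.fromBlocks₁₁ 1 X⁻¹ hY).mp (by simpa using hblock)

theorem one_le_det_of_one_le {H : Matrix n n ℝ} (hH : 1 ≤ H) : 1 ≤ H.det := by
  have hHerm : H.IsHermitian := by
    simpa using (nonneg_iff_posSemidef.mp (sub_nonneg.mpr hH)).isHermitian.add isHermitian_one
  have hspec := (CFC.one_le_iff (R := ℝ) H hHerm.isSelfAdjoint).mp hH
  rw [hHerm.det_eq_prod_eigenvalues]
  exact Finset.one_le_prod fun i _ => by
    simpa using hspec _ (hHerm.eigenvalues_mem_spectrum_real i)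

theorem PosDef.det_le_det {X Y : Matrix n n ℝ} (hX : X.PosDef) (hXY : X ≤ Y) :
    X.det ≤ Y.det := by
  set T := CFC.sqrt (Y - X)
  have hT : Tᴴ = T := (CFC.sqrt_nonneg (Y - X)).posSemidef.isHermitian.eq
  have hY : Y = X + T * T := by rw [CFC.sqrt_mul_sqrt_self _ (sub_nonneg.mpr hXY)]; abel
  have hone : 1 ≤ 1 + T * X⁻¹ * T := by
    have := hX.inv.posSemidef.mul_mul_conjTranspose_same T
    rw [hT] at this
    exact le_add_of_nonneg_right this.nonneg
  rw [hY, det_add_mul _ _ hX.det_pos.ne'.isUnit]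
  simpa using mul_le_mul_of_nonneg_left (one_le_det_of_one_le hone) hX.det_pos.le

theorem PosDef.det_add_mul_det_le_of_le {X Y C : Matrix n n ℝ} (hX : X.PosDef) (hXY : X ≤ Y)
    (hC : C.PosSemidef) : (Y + C).det * X.det ≤ Y.det * (X + C).det := by
  have hY := hX.of_le hXY
  set T := CFC.sqrt C
  have hT : Tᴴ = T := (CFC.sqrt_nonneg C).posSemidef.isHermitian.eq
  have hC_eq : C = T * T := (CFC.sqrt_mul_sqrt_self C hC.nonneg).symm
  have hconj : T * Y⁻¹ * T ≤ T * X⁻¹ * T := by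
    have := star_left_conjugate_le_conjugate (hX.inv_le_inv hXY) T
    rwa [star_eq_conjTranspose, hT] at this
  have hdet : (1 + T * Y⁻¹ * T).det ≤ (1 + T * X⁻¹ * T).det := by
    refine PosDef.det_le_det ?_ (add_le_add_right hconj 1)
    have := hY.inv.posSemidef.mul_mul_conjTranspose_same T
    exact PosDef.one.add_posSemidef (by rwa [hT] at this)
  rw [hC_eq, det_add_mul _ _ hX.det_pos.ne'.isUnit, det_add_mul _ _ hY.det_pos.ne'.isUnit]
  calc Y.det * (1 + T * Y⁻¹ * T).det * X.det
      ≤ Y.det * (1 + T * X⁻¹ * T).det * X.det :=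
        mul_le_mul_of_nonneg_right (mul_le_mul_of_nonneg_left hdet hY.det_pos.le) hX.det_pos.le
    _ = Y.det * (X.det * (1 + T * X⁻¹ * T).det) := by ring

end Matrix

/-- For positive definite matrices `M₁,…,M_s` and intersecting
subsets `I`, `J`, one has
`det(∑_{I∪J} M_i) ⬝ det(∑_{I∩J} M_i) ≤ det(∑_I M_i) ⬝ det(∑_J M_i)`;
equivalently `I ↦ log det (∑_{i∈I} M_i)` is submodular on such subsets. -/
theorem det_sum_submodular (m s : ℕ) (M : Fin s → Matrix (Fin m) (Fin m) ℝ)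
    (hM : ∀ i, (M i).PosDef) (I J : Finset (Fin s)) (hIJ : (I ∩ J).Nonempty) :
    (∑ i ∈ I ∪ J, M i).det * (∑ i ∈ I ∩ J, M i).det ≤
        (∑ i ∈ I, M i).det * (∑ i ∈ J, M i).det ∧
      Real.log (∑ i ∈ I ∪ J, M i).det + Real.log (∑ i ∈ I ∩ J, M i).det ≤
        Real.log (∑ i ∈ I, M i).det + Real.log (∑ i ∈ J, M i).det := by
  have hpos : ∀ K : Finset (Fin s), K.Nonempty → 0 < (∑ i ∈ K, M i).det :=
    fun K hK => (posDef_sum hK fun i _ => hM i).det_pos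
  have hsub : ∑ i ∈ I ∩ J, M i ≤ ∑ i ∈ I, M i :=
    Finset.sum_le_sum_of_subset_of_nonneg Finset.inter_subset_left
      fun i _ _ => (hM i).posSemidef.nonneg
  have hunion : ∑ i ∈ I ∪ J, M i = ∑ i ∈ I, M i + ∑ i ∈ J \ I, M i := by
    rw [← Finset.sum_union Finset.disjoint_sdiff, Finset.union_sdiff_self_eq_union]
  have hJ : ∑ i ∈ J, M i = ∑ i ∈ I ∩ J, M i + ∑ i ∈ J \ I, M i := by
    rw [Finset.inter_comm, Finset.sum_inter_add_sum_sdiff]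
  have hdet := (posDef_sum hIJ fun i _ => hM i).det_add_mul_det_le_of_le hsub
    (posSemidef_sum (J \ I) fun i _ => (hM i).posSemidef)
  rw [← hunion, ← hJ] at hdet
  refine ⟨hdet, ?_⟩
  have hI : I.Nonempty := hIJ.mono Finset.inter_subset_left
  have hpU := hpos (I ∪ J) (hI.mono Finset.subset_union_left)
  have hpIJ := hpos (I ∩ J) hIJ
  rw [← Real.log_mul hpU.ne' hpIJ.ne',
    ← Real.log_mul (hpos I hI).ne' (hpos J (hIJ.mono Finset.inter_subset_right)).ne']
  exact Real.log_le_log (mul_pos hpU hpIJ) hdet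
end

section
/- Let f : ℝ → ℝ be differentiable on (0,∞) and operator antitone on (0,∞), let M be an m×m real symmetric positive definite matrix, and suppose the map X ↦ f(X) (applying f to symmetric matrices via the spectral decomposition) is Fréchet differentiable at M on the space of m×m real symmetric matrices, with derivative D. Then for all m×m real symmetric matrices A, B with B − A positive semidefinite, the matrix D(A) − D(B) is positive semidefinite. -/
attribute [local instance] Matrix.normedAddCommGroup Matrix.normedSpace

/-!
`D A - D B` is the limit, as `t → 0⁺`, of the difference quotients
`t⁻¹ (f(M + tA) - f(M + tB))`. For small `t > 0` both `M + tA` and `M + tB` are positive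
definite and `M + tA ⪯ M + tB`, so operator antitonicity makes every such quotient positive
semidefinite, and the positive semidefinite cone is closed.
-/

open Filter Topology

namespace Matrix

variable {n : Type*} [Fintype n]

theorem isClosed_setOf_posSemidef : IsClosed {N : Matrix n n ℝ | N.PosSemidef} := by
  have hset : {N : Matrix n n ℝ | N.PosSemidef} =
      {N | Nᴴ = N} ∩ ⋂ x : n → ℝ, {N | 0 ≤ x ⬝ᵥ N *ᵥ x} := by
    ext N
    simp [posSemidef_iff_dotProduct_mulVec, IsHermitian]
  rw [hset]
  exact (isClosed_eq continuous_id.matrix_conjTranspose continuous_id).inter <|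
    isClosed_iInter fun x => isClosed_le continuous_const <|
      continuous_const.dotProduct (continuous_id.matrix_mulVec continuous_const)

theorem PosDef.eventually_posDef_add_smul {M A : Matrix n n ℝ} (hM : M.PosDef)
    (hA : A.IsHermitian) : ∀ᶠ t in 𝓝 (0 : ℝ), (M + t • A).PosDef := by
  let q : ℝ → (n → ℝ) → ℝ := fun t x => x ⬝ᵥ (M + t • A) *ᵥ x
  have hq : Continuous (Function.uncurry q) :=
    continuous_snd.dotProduct
      ((continuous_const.add (continuous_fst.smul continuous_const)).matrix_mulVec continuous_snd)
  have hsphere : ∀ᶠ t in 𝓝 (0 : ℝ), ∀ x ∈ Metric.sphere (0 : n → ℝ) 1, 0 < q t x := by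
    refine (isCompact_sphere 0 1).eventually_forall_of_forall_eventually fun x hx => ?_
    have hx0 : x ≠ 0 := ne_zero_of_mem_sphere one_ne_zero ⟨x, hx⟩
    have : 0 < q 0 x := by simpa [q] using hM.dotProduct_mulVec_pos hx0
    exact hq.continuousAt.eventually (lt_mem_nhds this)
  filter_upwards [hsphere] with t ht
  refine PosDef.of_dotProduct_mulVec_pos (hM.isHermitian.add (hA.smul (IsSelfAdjoint.all t)))
    fun x hx => ?_
  -- the quadratic form is homogeneous of degree 2, so positivity on the unit sphere suffices
  have hunit := ht (‖x‖⁻¹ • x) (by simp [norm_smul, norm_ne_zero_iff.mpr hx])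
  simp only [q, mulVec_smul, dotProduct_smul, smul_dotProduct, smul_eq_mul] at hunit
  have hinv : 0 < ‖x‖⁻¹ := inv_pos.mpr (norm_pos_iff.mpr hx)
  simpa using pos_of_mul_pos_right (pos_of_mul_pos_right hunit hinv.le) hinv.le

end Matrix

theorem HasFDerivWithinAt.tendsto_slope_smul_zero_right {E F : Type*} [NormedAddCommGroup E]
    [NormedSpace ℝ E] [NormedAddCommGroup F] [NormedSpace ℝ F] {g : E → F} {L : E →L[ℝ] F}
    {s : Set E} {x v : E} (hg : HasFDerivWithinAt g L s x) (hv : ∀ t : ℝ, x + t • v ∈ s) :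
    Tendsto (fun t : ℝ => t⁻¹ • (g (x + t • v) - g x)) (𝓝[>] 0) (𝓝 (L v)) := by
  have hline := hg.hasLineDerivWithinAt v
  rw [HasLineDerivWithinAt, Set.preimage_eq_univ_iff.mpr (by rintro _ ⟨t, rfl⟩; exact hv t),
    hasDerivWithinAt_univ] at hline
  simpa using hline.tendsto_slope_zero_right

open Asymptotics in
theorem fderiv_matFun_antitone_general (f : ℝ → ℝ)
    (hf_anti : OperatorAntitoneOn f)
    (m : ℕ) (M : Matrix (Fin m) (Fin m) ℝ) (hM : M.PosDef)
    (D : Matrix (Fin m) (Fin m) ℝ →L[ℝ] Matrix (Fin m) (Fin m) ℝ)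
    (hD : (fun H : Matrix (Fin m) (Fin m) ℝ => matFun f (M + H) - matFun f M - D H)
      =o[nhdsWithin 0 {H : Matrix (Fin m) (Fin m) ℝ | H.IsHermitian}]
        (fun H : Matrix (Fin m) (Fin m) ℝ => H)) :
    ∀ A B : Matrix (Fin m) (Fin m) ℝ, A.IsHermitian → B.IsHermitian →
      (B - A).PosSemidef → (D A - D B).PosSemidef := by
  intro A B hA hB hBA
  have hderiv : HasFDerivWithinAt (fun H => matFun f (M + H)) D {H | H.IsHermitian} 0 := by
    refine hasFDerivWithinAt_iff_isLittleO.mpr ?_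
    simp only [add_zero, sub_zero]
    exact hD
  have hslope : ∀ C : Matrix (Fin m) (Fin m) ℝ, C.IsHermitian → Tendsto
      (fun t : ℝ => t⁻¹ • (matFun f (M + t • C) - matFun f M)) (𝓝[>] 0) (𝓝 (D C)) := by
    intro C hC
    have := hderiv.tendsto_slope_smul_zero_right (v := C)
      fun t => by simpa using hC.smul (IsSelfAdjoint.all t)
    simp only [zero_add, add_zero] at this
    exact this
  refine Matrix.isClosed_setOf_posSemidef.mem_of_tendsto ((hslope A hA).sub (hslope B hB)) ?_
  filter_upwards [nhdsWithin_le_nhds (hM.eventually_posDef_add_smul hA),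
    nhdsWithin_le_nhds (hM.eventually_posDef_add_smul hB), self_mem_nhdsWithin]
    with t hMA hMB (ht : 0 < t)
  have hle : (M + t • B - (M + t • A)).PosSemidef := by
    simpa [smul_sub] using hBA.smul ht.le
  rw [← smul_sub, sub_sub_sub_cancel_right]
  exact (hf_anti m _ _ hMA hMB hle).smul (inv_nonneg.mpr ht.le)

open Asymptotics in
/-- Let `f` be differentiable and operator antitone on
`(0,∞)`, `M` symmetric positive definite, and suppose `X ↦ f(X)` is Fréchet
differentiable at `M` on the space of symmetric matrices, with derivative `D`.
Then for all symmetric matrices `A ⪯ B` (i.e. `B - A` positive semidefinite),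
the matrix `D(A) - D(B)` is positive semidefinite. -/
theorem fderiv_matFun_antitone (f : ℝ → ℝ)
    (hf_diff : DifferentiableOn ℝ f (Set.Ioi (0 : ℝ)))
    (hf_anti : OperatorAntitoneOn f)
    (m : ℕ) (M : Matrix (Fin m) (Fin m) ℝ) (hM : M.PosDef)
    (D : Matrix (Fin m) (Fin m) ℝ →L[ℝ] Matrix (Fin m) (Fin m) ℝ)
    (hD : (fun H : Matrix (Fin m) (Fin m) ℝ => matFun f (M + H) - matFun f M - D H)
      =o[nhdsWithin 0 {H : Matrix (Fin m) (Fin m) ℝ | H.IsHermitian}]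
        (fun H : Matrix (Fin m) (Fin m) ℝ => H)) :
    ∀ A B : Matrix (Fin m) (Fin m) ℝ, A.IsHermitian → B.IsHermitian →
      (B - A).PosSemidef → (D A - D B).PosSemidef :=
  fderiv_matFun_antitone_general f hf_anti m M hM D hD
end

section
/- Let p ∈ [0,1], let r and s be positive integers with r ≤ s, and let w ∈ ℝ^s be a nonnegative vector with Σ_{i=1}^s w_i = r, sorted so that w₁ ≥ w₂ ≥ … ≥ w_s ≥ 0, and satisfying w_i ≤ 1 for all i. Then (1/r) Σ_{i=1}^r w_i^{1−p} ≥ (r/s)^{1−p}, with the convention 0⁰ = 0. -/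
/-!
Write `q = 1 - p ≥ 0` and `t = r / s`. Since `w` is nonincreasing, so is `i ↦ w_i ^ q` (this is
where the convention `0 ^ 0 = 0` matters when `q = 0`), and the bathtub principle (among weights
in `[0, 1]` of total mass `r`, the indicator of the first `r` indices maximises a sum against a
nonincreasing sequence) gives `∑_{i<s} w_i ^ (q+1) = ∑_{i<s} w_i ^ q · w_i ≤ ∑_{i<r} w_i ^ q`.
By Jensen's inequality for the convex function `x ↦ x ^ (q+1)`, the left side is at least
`s · t ^ (q+1) = r · t ^ q`.
-/

open Finset

/-- Real power with the convention `0 ^ q = 0` (in particular `0 ^ 0 = 0`). -/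
noncomputable def cpow (x q : ℝ) : ℝ := if x = 0 then 0 else Real.rpow x q

lemma cpow_nonneg {x : ℝ} (hx : 0 ≤ x) (q : ℝ) : 0 ≤ cpow x q := by
  unfold cpow
  split_ifs
  exacts [le_rfl, Real.rpow_nonneg hx q]

lemma cpow_le_cpow {x y q : ℝ} (hx : 0 ≤ x) (hxy : x ≤ y) (hq : 0 ≤ q) :
    cpow x q ≤ cpow y q := by
  rcases hx.eq_or_lt with rfl | hx
  · simpa [cpow] using cpow_nonneg hxy q
  · simp only [cpow, hx.ne', (hx.trans_le hxy).ne', if_false, Real.rpow_eq_pow]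
    exact Real.rpow_le_rpow hx.le hxy hq

lemma cpow_mul_self (x : ℝ) {q : ℝ} (hq : q + 1 ≠ 0) : cpow x q * x = x ^ (q + 1) := by
  unfold cpow
  split_ifs with hx
  · simp [hx, Real.zero_rpow hq]
  · exact (Real.rpow_add_one hx q).symm

lemma card_mul_rpow_sum_div_card_le_sum_rpow {ι : Type*} (t : Finset ι) {f : ι → ℝ}
    (hf : ∀ i ∈ t, 0 ≤ f i) {p : ℝ} (hp : 1 ≤ p) :
    (#t : ℝ) * ((∑ i ∈ t, f i) / #t) ^ p ≤ ∑ i ∈ t, f i ^ p := by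
  rcases t.eq_empty_or_nonempty with rfl | ht
  · simp
  have hcard : (0 : ℝ) < #t := by exact_mod_cast ht.card_pos
  have hjensen := Real.rpow_arith_mean_le_arith_mean_rpow t (fun _ ↦ (#t : ℝ)⁻¹) f
    (fun _ _ ↦ by positivity) (by simp [hcard.ne']) hf hp
  rw [← mul_sum, ← mul_sum, inv_mul_eq_div, inv_mul_eq_div, le_div_iff₀ hcard] at hjensen
  linarith

theorem sum_range_mul_le_sum_range_of_antitoneOn {g w : ℕ → ℝ} {r s : ℕ} (hrs : r ≤ s)
    (hg : AntitoneOn g (Set.Iio s)) (hw0 : ∀ i < s, 0 ≤ w i) (hw1 : ∀ i < r, w i ≤ 1)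
    (hsum : ∑ i ∈ range s, w i = r) :
    ∑ i ∈ range s, g i * w i ≤ ∑ i ∈ range r, g i := by
  -- The tail mass `∑_{r ≤ i < s} w i`, where `g ≤ c`, equals the room `∑_{i < r} (1 - w i)`
  -- left at the head, where `g ≥ c`.
  set c := g (r - 1)
  have htail : ∑ i ∈ Ico r s, g i * w i ≤ c * ∑ i ∈ Ico r s, w i := by
    rw [mul_sum]
    refine sum_le_sum fun i hi ↦ ?_
    have hi := mem_Ico.1 hi
    exact mul_le_mul_of_nonneg_right (hg (by simp; omega) (by simpa using hi.2) (by omega))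
      (hw0 i hi.2)
  have hmass : ∑ i ∈ Ico r s, w i = ∑ i ∈ range r, (1 - w i) := by
    rw [sum_sub_distrib, ← sum_range_add_sum_Ico w hrs] at *
    simp only [sum_const, card_range, nsmul_eq_mul, mul_one]
    linarith
  have hhead : c * ∑ i ∈ range r, (1 - w i) ≤ ∑ i ∈ range r, g i * (1 - w i) := by
    rw [mul_sum]
    refine sum_le_sum fun i hi ↦ ?_
    have hi := mem_range.1 hi
    exact mul_le_mul_of_nonneg_right (hg (by simp; omega) (by simp; omega) (by omega))
      (by linarith [hw1 i hi])
  calc ∑ i ∈ range s, g i * w i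
      = ∑ i ∈ range r, g i * w i + ∑ i ∈ Ico r s, g i * w i :=
        (sum_range_add_sum_Ico _ hrs).symm
    _ ≤ ∑ i ∈ range r, g i * w i + ∑ i ∈ range r, g i * (1 - w i) := by
        rw [hmass] at htail
        linarith
    _ = ∑ i ∈ range r, g i := by
        rw [← sum_add_distrib]
        exact sum_congr rfl fun i _ ↦ by ring

/-- **Lemma, condition (i).** Let `p ∈ [0,1]`, `1 ≤ r ≤ s`, and
`w` a nonnegative, nonincreasing vector of length `s` summing to `r` with all
entries at most `1`. Then `(1/r) ∑_{i=1}^r w_i^{1-p} ≥ (r/s)^{1-p}`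
(convention `0⁰ = 0`). -/
theorem sorted_sum_rpow_lower_bound_of_le_one (p : ℝ) (hp : p ∈ Set.Icc (0 : ℝ) 1)
    (r s : ℕ) (hr : 0 < r) (hrs : r ≤ s)
    (w : ℕ → ℝ) (hw0 : ∀ i < s, 0 ≤ w i)
    (hsorted : ∀ i j, i ≤ j → j < s → w j ≤ w i)
    (hsum : ∑ i ∈ Finset.range s, w i = r)
    (hle1 : ∀ i < s, w i ≤ 1) :
    Real.rpow ((r : ℝ) / s) (1 - p) ≤
      (1 / (r : ℝ)) * ∑ i ∈ Finset.range r, cpow (w i) (1 - p) := by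
  set q := 1 - p
  have hq : 0 ≤ q := sub_nonneg.2 hp.2
  have hr₀ : (0 : ℝ) < r := by exact_mod_cast hr
  have hs₀ : (0 : ℝ) < s := by exact_mod_cast hr.trans_le hrs
  have hantitone : AntitoneOn (fun i ↦ cpow (w i) q) (Set.Iio s) := fun i _ j hj hij ↦
    cpow_le_cpow (hw0 j hj) (hsorted i j hij hj) hq
  calc Real.rpow ((r : ℝ) / s) q = 1 / r * (s * ((r : ℝ) / s) ^ (q + 1)) := by
        rw [Real.rpow_add_one (by positivity)]
        field_simp
        rfl
    _ ≤ 1 / r * ∑ i ∈ range s, w i ^ (q + 1) := by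
        gcongr
        simpa [hsum] using card_mul_rpow_sum_div_card_le_sum_rpow (range s)
          (fun i hi ↦ hw0 i (mem_range.1 hi)) (by linarith : 1 ≤ q + 1)
    _ = 1 / r * ∑ i ∈ range s, cpow (w i) q * w i := by
        congr 1
        exact sum_congr rfl fun i _ ↦ (cpow_mul_self _ (by linarith)).symm
    _ ≤ 1 / r * ∑ i ∈ range r, cpow (w i) q := by
        gcongr
        exact sum_range_mul_le_sum_range_of_antitoneOn hrs hantitone hw0
          (fun i hi ↦ hle1 i (hi.trans_le hrs)) hsum
end

section
/- Let p ∈ [0,1], let r and s be positive integers with r ≤ s and s ≥ 2, and let w ∈ ℝ^s be a nonnegative vector with Σ_{i=1}^s w_i = r, sorted so that w₁ ≥ w₂ ≥ … ≥ w_s ≥ 0. If p ≤ 1 − (ln r)/(ln s), then (1/r) Σ_{i=1}^r w_i^{1−p} ≥ (r/s)^{1−p}, with the convention 0⁰ = 0. -/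
/-!
A nonincreasing nonnegative vector `w₀ ≥ ⋯ ≥ w_{s-1}` of total mass `m` is a convex combination
of the "flat" vectors `(m/(k+1)) · 𝟙_{i ≤ k}`, `k < s`, with weights `(k+1)(w_k - w_{k+1})/m`
where `w_s = 0` (Abel summation). Since `x ↦ x^q` (with `0^q = 0`) is concave on `[0, ∞)`,
Jensen's inequality reduces the claim to these extreme points, where the top-`r` sum is
`min(r, k+1) (r/(k+1))^q`. This is at least `r (r/s)^q`: for `k + 1 ≥ r` because `k + 1 ≤ s`,
and for `k + 1 ≤ r` because `r ≤ s^q`, which is the hypothesis on `p`.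
-/

open Finset Real

theorem ConcaveOn.ite_eq_zero {f : ℝ → ℝ} (hf : ConcaveOn ℝ (Set.Ici 0) f) (hf0 : 0 ≤ f 0) :
    ConcaveOn ℝ (Set.Ici 0) (fun x ↦ if x = 0 then 0 else f x) := by
  set g : ℝ → ℝ := fun x ↦ if x = 0 then 0 else f x
  refine ⟨convex_Ici 0, fun x (hx : 0 ≤ x) y (hy : 0 ≤ y) a b ha hb hab ↦ ?_⟩
  simp only [smul_eq_mul]
  by_cases hxy : a * x + b * y = 0
  · have hzero : ∀ c z, c * z = 0 → c * g z = 0 := fun c z h ↦ by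
      rcases mul_eq_zero.1 h with h | h <;> simp [g, h]
    rw [hzero a x (by nlinarith [mul_nonneg ha hx, mul_nonneg hb hy]),
      hzero b y (by nlinarith [mul_nonneg ha hx, mul_nonneg hb hy])]
    simp [g, hxy]
  · have hle : ∀ z, g z ≤ f z := fun z ↦ by by_cases h : z = 0 <;> simp [g, h, hf0]
    calc a * g x + b * g y ≤ a * f x + b * f y := by gcongr <;> exact hle _
      _ ≤ f (a * x + b * y) := by simpa using hf.2 hx hy ha hb hab
      _ = g (a * x + b * y) := by simp [g, hxy]

theorem concaveOn_cpow {q : ℝ} (hq0 : 0 ≤ q) (hq1 : q ≤ 1) :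
    ConcaveOn ℝ (Set.Ici 0) (fun x ↦ cpow x q) :=
  (Real.concaveOn_rpow hq0 hq1).ite_eq_zero (by positivity)

noncomputable def uniformPrefix (m : ℝ) (k i : ℕ) : ℝ := if i ≤ k then m / (k + 1) else 0

theorem sum_range_succ_mul_sub_succ (w : ℕ → ℝ) (n : ℕ) :
    ∑ k ∈ range n, (k + 1) * (w k - w (k + 1)) = ∑ k ∈ range n, w k - n * w n := by
  induction n with
  | zero => simp
  | succ n ih => rw [sum_range_succ, ih, sum_range_succ]; push_cast; ring

theorem sum_range_ite_le_sub_succ (w : ℕ → ℝ) {i n : ℕ} (hin : i ≤ n) :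
    ∑ k ∈ range n, (if i ≤ k then w k - w (k + 1) else 0) = w i - w n := by
  rw [← sum_filter, range_eq_Ico, Ico_filter_le, max_eq_right i.zero_le, ← neg_inj,
    ← sum_neg_distrib]
  simp_rw [neg_sub]
  exact sum_Ico_sub w hin

theorem le_sum_map_of_antitone {f : ℝ → ℝ} (hf : ConcaveOn ℝ (Set.Ici 0) f) {w : ℕ → ℝ}
    {r s : ℕ} {m C : ℝ} (hw : Antitone w) (hws : w s = 0) (hrs : r ≤ s)
    (hsum : ∑ i ∈ range s, w i = m) (hm : 0 < m)
    (hC : ∀ k < s, C ≤ ∑ i ∈ range r, f (uniformPrefix m k i)) :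
    C ≤ ∑ i ∈ range r, f (w i) := by
  set c : ℕ → ℝ := fun k ↦ (k + 1) * (w k - w (k + 1)) / m
  have hc0 : ∀ k ∈ range s, 0 ≤ c k := fun k _ ↦
    div_nonneg (mul_nonneg (by positivity) (sub_nonneg.2 (hw k.le_succ))) hm.le
  have hc1 : ∑ k ∈ range s, c k = 1 := by
    rw [← sum_div, sum_range_succ_mul_sub_succ, hws, hsum, mul_zero, sub_zero, div_self hm.ne']
  have hcomb : ∀ i ≤ s, ∑ k ∈ range s, c k • uniformPrefix m k i = w i := fun i hi ↦ by
    have hck : ∀ k, c k • uniformPrefix m k i = if i ≤ k then w k - w (k + 1) else 0 := by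
      intro k; simp only [uniformPrefix, smul_eq_mul, mul_ite, mul_zero, c]; field_simp
    simp_rw [hck, sum_range_ite_le_sub_succ w hi, hws, sub_zero]
  calc C = ∑ k ∈ range s, c k * C := by rw [← sum_mul, hc1, one_mul]
    _ ≤ ∑ k ∈ range s, c k * ∑ i ∈ range r, f (uniformPrefix m k i) :=
        sum_le_sum fun k hk ↦ mul_le_mul_of_nonneg_left (hC k (mem_range.1 hk)) (hc0 k hk)
    _ = ∑ i ∈ range r, ∑ k ∈ range s, c k • f (uniformPrefix m k i) := by
        simp_rw [mul_sum, smul_eq_mul]; exact sum_comm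
    _ ≤ ∑ i ∈ range r, f (w i) := by
        gcongr with i hi
        rw [← hcomb i ((mem_range.1 hi).trans_le hrs).le]
        exact hf.le_map_sum hc0 hc1 fun k _ ↦ by
          unfold uniformPrefix; split_ifs <;> simp only [Set.mem_Ici] <;> positivity

theorem sum_range_map_uniformPrefix {f : ℝ → ℝ} (hf0 : f 0 = 0) (m : ℝ) (k r : ℕ) :
    ∑ i ∈ range r, f (uniformPrefix m k i) = min r (k + 1) * f (m / (k + 1)) := by
  simp_rw [uniformPrefix, apply_ite f, hf0, ← Nat.lt_succ_iff, ← mem_range, sum_ite_mem,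
    range_inter_range, sum_const, card_range, nsmul_eq_mul]

theorem le_rpow_of_log_div_log_le {r s q : ℝ} (hr : 1 ≤ r) (hrs : r ≤ s)
    (h : log r / log s ≤ q) : r ≤ s ^ q := by
  have hlogr : log r ≤ log s := log_le_log (by linarith) hrs
  rw [le_rpow_iff_log_le (by linarith) (by linarith)]
  rcases (log_nonneg (hr.trans hrs)).eq_or_lt with h0 | h0
  · rw [← h0] at hlogr ⊢; simpa using hlogr
  · exact (div_le_iff₀ h0).1 h

theorem mul_rpow_div_le_min_mul_rpow_div {q r s n : ℝ} (hq0 : 0 ≤ q) (hq1 : q ≤ 1) (hr : 0 < r)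
    (hn : 1 ≤ n) (hns : n ≤ s) (hrs : r ≤ s ^ q) :
    r * (r / s) ^ q ≤ min r n * (r / n) ^ q := by
  have hs : 0 < s := by linarith
  rcases le_total n r with hnr | hrn
  · rw [min_eq_right hnr]
    calc r * (r / s) ^ q = r ^ q * (r / s ^ q) := by
          rw [div_rpow hr.le hs.le]; ring
      _ ≤ r ^ q * 1 := by gcongr; exact div_le_one_of_le₀ hrs (by positivity)
      _ ≤ r ^ q * n ^ (1 - q) := by gcongr; exact one_le_rpow hn (by linarith)
      _ = n * (r / n) ^ q := by
          rw [div_rpow hr.le (by linarith), rpow_sub (by linarith), rpow_one]; field_simp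
  · rw [min_eq_left hrn]
    gcongr

theorem sorted_sum_rpow_lower_bound_of_log_general (p : ℝ) (hp : p ∈ Set.Icc (0 : ℝ) 1)
    (r s : ℕ) (hr : 0 < r) (hrs : r ≤ s)
    (w : ℕ → ℝ) (hw0 : ∀ i < s, 0 ≤ w i)
    (hsorted : ∀ i j, i ≤ j → j < s → w j ≤ w i)
    (hsum : ∑ i ∈ Finset.range s, w i = r)
    (hplog : p ≤ 1 - Real.log r / Real.log s) :
    Real.rpow ((r : ℝ) / s) (1 - p) ≤
      (1 / (r : ℝ)) * ∑ i ∈ Finset.range r, cpow (w i) (1 - p) := by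
  obtain ⟨hp0, hp1⟩ := hp
  have hr' : (0 : ℝ) < r := by exact_mod_cast hr
  have hrs' : (r : ℝ) ≤ s := by exact_mod_cast hrs
  have hr_le : (r : ℝ) ≤ (s : ℝ) ^ (1 - p) :=
    le_rpow_of_log_div_log_le (by exact_mod_cast hr) hrs' (by linarith)
  set v : ℕ → ℝ := fun i ↦ if i < s then w i else 0
  have hv : Antitone v := fun i j hij ↦ by
    by_cases hj : j < s
    · simp [v, hj, lt_of_le_of_lt hij hj, hsorted i j hij hj]
    · by_cases hi : i < s <;> simp [v, hi, hj, hw0]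
  have hvsum : ∑ i ∈ range s, v i = r := by
    rw [← hsum]; exact sum_congr rfl fun i hi ↦ if_pos (mem_range.1 hi)
  have hvr : ∑ i ∈ range r, cpow (v i) (1 - p) = ∑ i ∈ range r, cpow (w i) (1 - p) :=
    sum_congr rfl fun i hi ↦ by simp [v, (mem_range.1 hi).trans_le hrs]
  have key := le_sum_map_of_antitone (concaveOn_cpow (q := 1 - p) (by linarith) (by linarith)) hv
    (by simp [v]) hrs hvsum hr' (C := r * (r / s : ℝ) ^ (1 - p)) fun k hk ↦ by
      rw [sum_range_map_uniformPrefix (f := (cpow · (1 - p))) (by simp [cpow]), cpow,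
        if_neg (by positivity), Nat.cast_min, Nat.cast_succ]
      exact mul_rpow_div_le_min_mul_rpow_div (by linarith) (by linarith) hr'
        (by simp) (by exact_mod_cast hk) hr_le
  rw [hvr] at key
  change (r / s : ℝ) ^ (1 - p) ≤ _
  rw [one_div, inv_mul_eq_div, le_div_iff₀ hr', mul_comm]
  exact key

/-- **Lemma, condition (ii).** Let `p ∈ [0,1]`, `1 ≤ r ≤ s`,
`s ≥ 2`, and `w` a nonnegative, nonincreasing vector of length `s` summing to
`r`. If `p ≤ 1 - (ln r)/(ln s)`, then
`(1/r) ∑_{i=1}^r w_i^{1-p} ≥ (r/s)^{1-p}` (convention `0⁰ = 0`). -/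
theorem sorted_sum_rpow_lower_bound_of_log (p : ℝ) (hp : p ∈ Set.Icc (0 : ℝ) 1)
    (r s : ℕ) (hr : 0 < r) (hrs : r ≤ s) (hs : 2 ≤ s)
    (w : ℕ → ℝ) (hw0 : ∀ i < s, 0 ≤ w i)
    (hsorted : ∀ i j, i ≤ j → j < s → w j ≤ w i)
    (hsum : ∑ i ∈ Finset.range s, w i = r)
    (hplog : p ≤ 1 - Real.log r / Real.log s) :
    Real.rpow ((r : ℝ) / s) (1 - p) ≤
      (1 / (r : ℝ)) * ∑ i ∈ Finset.range r, cpow (w i) (1 - p) :=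
  sorted_sum_rpow_lower_bound_of_log_general p hp r s hr hrs w hw0 hsorted hsum hplog
end
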